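/- arXiv:2006.12675 — 5 statements merged into one kernel-verified Lean document; each statement's English description precedes it below -/
import Mathlib

section
/- The countable Boolean group [ω]^{<ω} (finite subsets of ω under symmetric difference) endowed with the Bohr topology (the initial topology induced by all group homomorphisms into Z/2Z, where Z/2Z is discrete) is Hausdorff and has no non-trivial convergent sequences: every convergent sequence is eventually constant. -/
/-!
Every `ZMod 2`-linear functional is a character, so its fibres are Bohr-open.
Distinct points are separated by a functional, which gives the Hausdorff property. If `x n → y`,
then every functional eventually vanishes on `x n - y`. Over a finite field such a weakly null
sequence has finite range: an infinite range would contain an infinite linearly independent set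
(finite sets span finite subspaces), and a functional equal to `1` on that set would be nonzero
infinitely often along the sequence. Finitely many functionals then separate the finitely many
nonzero values from `0`, so the sequence is eventually `0`.
-/

open Filter Set Module Topology

section WeaklyNull

variable {K V ι : Type*} [Field K] [AddCommGroup V] [Module K V]

theorem finite_range_of_forall_dual_eventually_eq_zero [Finite K] {z : ι → V}
    (h : ∀ f : Dual K V, ∀ᶠ k in cofinite, f (z k) = 0) : (range z).Finite := by
  by_contra hinf
  obtain ⟨b, hb_sub, -, hb_span, hb_indep⟩ :=
    exists_linearIndepOn_id_extension (linearIndepOn_empty K id) (empty_subset (range z))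
  have hb_inf : b.Infinite := fun hb => hinf ((hb.submoduleSpan K).subset hb_span)
  set B := Basis.extend hb_indep
  have hB : ∀ v ∈ b, B.sumCoords v = 1 := fun v hv => by
    simpa [B] using B.sumCoords_self_apply (i := ⟨v, Basis.subset_extend _ hv⟩)
  have hfreq : ∃ᶠ k in cofinite, z k ∈ b :=
    frequently_cofinite_iff_infinite.2 (hb_inf.preimage hb_sub)
  obtain ⟨k, hk0, hkb⟩ := ((h B.sumCoords).and_frequently hfreq).exists
  exact one_ne_zero ((hB _ hkb).symm.trans hk0)

theorem eventually_eq_zero_of_forall_dual_eventually_eq_zero [Finite K] {z : ι → V}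
    (h : ∀ f : Dual K V, ∀ᶠ k in cofinite, f (z k) = 0) : ∀ᶠ k in cofinite, z k = 0 := by
  choose f hf using fun v : {v : V // v ≠ 0} => Projective.exists_dual_ne_zero K v.2
  have hfin : {v : {v : V // v ≠ 0} | (v : V) ∈ range z}.Finite :=
    (finite_range_of_forall_dual_eventually_eq_zero h).preimage Subtype.val_injective.injOn
  filter_upwards [(eventually_all_finite hfin).2 fun v _ => h (f v)] with k hk
  by_contra hzk
  exact hf ⟨z k, hzk⟩ (hk ⟨z k, hzk⟩ ⟨k, rfl⟩)

end WeaklyNull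

section OpenFibers

variable {K V : Type*} [Field K] [AddCommGroup V] [Module K V] [TopologicalSpace V]

theorem t2Space_of_isOpen_preimage_dual
    (hV : ∀ (f : Dual K V) (a : K), IsOpen (f ⁻¹' {a})) : T2Space V := by
  refine ⟨fun x y hxy => ?_⟩
  obtain ⟨f, hf⟩ := Projective.exists_dual_ne_zero K (sub_ne_zero.2 hxy)
  rw [map_sub, sub_ne_zero] at hf
  exact ⟨_, _, hV f (f x), hV f (f y), rfl, rfl, (disjoint_singleton.2 hf).preimage f⟩

theorem eventually_eq_of_tendsto_of_isOpen_preimage_dual [Finite K]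
    (hV : ∀ (f : Dual K V) (a : K), IsOpen (f ⁻¹' {a}))
    {x : ℕ → V} {y : V} (hxy : Tendsto x atTop (𝓝 y)) : ∀ᶠ n in atTop, x n = y := by
  have hweak : ∀ f : Dual K V, ∀ᶠ n in cofinite, f (x n - y) = 0 := fun f => by
    rw [Nat.cofinite_eq_atTop]
    filter_upwards [hxy ((hV f (f y)).mem_nhds rfl)] with n hn
    rw [map_sub, sub_eq_zero]
    exact hn
  simpa [Nat.cofinite_eq_atTop, sub_eq_zero] using
    eventually_eq_zero_of_forall_dual_eventually_eq_zero hweak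

end OpenFibers

/-- The countable Boolean group `[ω]^{<ω}` (here `ℕ →₀ ZMod 2`) with the Bohr
topology (initial topology of all homomorphisms into discrete `ZMod 2`) is
Hausdorff and has no non-trivial convergent sequences. -/
theorem stmt2 [τ : TopologicalSpace (ℕ →₀ ZMod 2)]
    (hτ : τ = ⨅ Φ : (ℕ →₀ ZMod 2) →+ ZMod 2,
      TopologicalSpace.induced (⇑Φ) ⊥) :
    T2Space (ℕ →₀ ZMod 2) ∧
      ∀ (x : ℕ → (ℕ →₀ ZMod 2)) (y : ℕ →₀ ZMod 2),
        Filter.Tendsto x Filter.atTop (nhds y) →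
          ∀ᶠ n in Filter.atTop, x n = y := by
  have hV : ∀ (f : Dual (ZMod 2) (ℕ →₀ ZMod 2)) (a : ZMod 2), IsOpen (f ⁻¹' {a}) := by
    intro f a
    subst hτ
    exact (iInf_le _ f.toAddMonoidHom : _ ≤ TopologicalSpace.induced _ ⊥) _ ⟨{a}, trivial, rfl⟩
  exact ⟨t2Space_of_isOpen_preimage_dual hV,
    fun _ _ => eventually_eq_of_tendsto_of_isOpen_preimage_dual hV⟩
end

section
/- A nonprincipal ultrafilter p on ω is a Q-point if and only if for every finite-to-one function f : ω → [ω]^{<ω} there is a set U ∈ p such that the restriction of f to U is injective and its image {f(n) : n ∈ U} is linearly independent over F₂. -/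
/-- Nonzero vectors with pairwise distinct top support indices are linearly
independent over `F₂`. -/
lemma aux_li (s : Set (ℕ →₀ ZMod 2)) (h0 : (0 : ℕ →₀ ZMod 2) ∉ s)
    (hinj : Set.InjOn (fun x : ℕ →₀ ZMod 2 => x.support.sup id) s) :
    LinearIndependent (ZMod 2) (Subtype.val : s → (ℕ →₀ ZMod 2)) := by
  rw [linearIndependent_iff]
  intro l hl
  by_contra hne
  have hsupp : l.support.Nonempty := Finsupp.support_nonempty_iff.mpr hne
  set M : s → ℕ := fun x => (x : ℕ →₀ ZMod 2).support.sup id with hM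
  obtain ⟨i, hi, hmax⟩ := l.support.exists_max_image M hsupp
  have hine : (i : ℕ →₀ ZMod 2) ≠ 0 := fun h => h0 (h ▸ i.2)
  have hsne : (i : ℕ →₀ ZMod 2).support.Nonempty := Finsupp.support_nonempty_iff.mpr hine
  obtain ⟨b, hb, hbe⟩ := Finset.exists_mem_eq_sup _ hsne id
  have hMim : M i ∈ (i : ℕ →₀ ZMod 2).support := by
    have : M i = b := hbe
    rw [this]; exact hb
  have hMi : (i : ℕ →₀ ZMod 2) (M i) ≠ 0 := Finsupp.mem_support_iff.mp hMim
  have key : (Finsupp.linearCombination (ZMod 2) (Subtype.val : s → (ℕ →₀ ZMod 2)) l) (M i)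
      = l i * ((i : ℕ →₀ ZMod 2) (M i)) := by
    rw [Finsupp.linearCombination_apply, Finsupp.sum, Finsupp.finset_sum_apply]
    rw [Finset.sum_eq_single i]
    · simp [Finsupp.smul_apply]
    · intro j hj hji
      have hMj : M j < M i := by
        rcases lt_or_eq_of_le (hmax j hj) with h | h
        · exact h
        · exact absurd (Subtype.ext (hinj j.2 i.2 h)) hji
      have : (j : ℕ →₀ ZMod 2) (M i) = 0 := by
        by_contra hc
        have : M i ∈ (j : ℕ →₀ ZMod 2).support := Finsupp.mem_support_iff.mpr hc
        have := Finset.le_sup (f := id) this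
        exact absurd this (by simpa using not_le_of_gt hMj)
      simp [Finsupp.smul_apply, this]
    · intro h; exact absurd hi h
  rw [hl] at key
  simp only [Finsupp.coe_zero, Pi.zero_apply] at key
  rcases mul_eq_zero.mp key.symm with h | h
  · exact Finsupp.mem_support_iff.mp hi h
  · exact hMi h

/-- A nonprincipal ultrafilter `p` on `ω` is a Q-point iff for every
finite-to-one `f : ω → [ω]^{<ω}` (here `ℕ →₀ ZMod 2`) there is `U ∈ p` on which
`f` is injective with linearly independent image over `F₂`. -/
theorem stmt7 (p : Ultrafilter ℕ) (hp : (p : Filter ℕ) ≤ Filter.cofinite) :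
    (∀ g : ℕ → ℕ, (∀ k, (g ⁻¹' {k}).Finite) → ∃ U ∈ p, Set.InjOn g U) ↔
      (∀ f : ℕ → (ℕ →₀ ZMod 2), (∀ x, (f ⁻¹' {x}).Finite) →
        ∃ U ∈ p, Set.InjOn f U ∧
          LinearIndependent (ZMod 2) (Subtype.val : ↥(f '' U) → (ℕ →₀ ZMod 2))) := by
  constructor
  · -- Q-point → RHS
    intro hQ f hf
    set g : ℕ → ℕ := fun n => (f n).support.sup id with hg
    have hgfin : ∀ k, (g ⁻¹' {k}).Finite := by
      intro k
      -- vectors supported in range (k+1) form a finite set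
      have hS : {x : ℕ →₀ ZMod 2 | x.support ⊆ Finset.range (k+1)}.Finite := by
        apply Set.Finite.of_finite_image (f := fun x (i : Fin (k+1)) => x (i : ℕ))
        · exact Set.toFinite _
        · intro x hx y hy hxy
          ext j
          by_cases hj : j < k + 1
          · exact congrFun hxy ⟨j, hj⟩
          · have hx0 : x j = 0 := by
              by_contra hc
              exact hj (Finset.mem_range.mp (hx (Finsupp.mem_support_iff.mpr hc)))
            have hy0 : y j = 0 := by
              by_contra hc
              exact hj (Finset.mem_range.mp (hy (Finsupp.mem_support_iff.mpr hc)))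
            rw [hx0, hy0]
      have hsub : g ⁻¹' {k} ⊆ f ⁻¹' {x : ℕ →₀ ZMod 2 | x.support ⊆ Finset.range (k+1)} := by
        intro n hn
        simp only [Set.mem_preimage, Set.mem_singleton_iff] at hn
        intro j hj
        have : j ≤ g n := Finset.le_sup (f := id) hj
        rw [hn] at this
        exact Finset.mem_range.mpr (Nat.lt_succ_of_le this)
      have : (f ⁻¹' {x : ℕ →₀ ZMod 2 | x.support ⊆ Finset.range (k+1)}).Finite := by
        rw [← Set.biUnion_preimage_singleton]
        exact hS.biUnion fun x _ => hf x
      exact this.subset hsub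
    obtain ⟨U, hU, hUinj⟩ := hQ g hgfin
    refine ⟨U ∩ (f ⁻¹' {0})ᶜ, ?_, ?_, ?_⟩
    · exact p.toFilter.inter_mem hU (hp (by simpa [Filter.mem_cofinite] using hf 0))
    · intro n hn m hm hnm
      exact hUinj hn.1 hm.1 (by rw [hg]; simp only; rw [hnm])
    · apply aux_li
      · rintro ⟨n, hn, hn0⟩
        exact hn.2 hn0
      · rintro x ⟨n, hn, rfl⟩ y ⟨m, hm, rfl⟩ hxy
        rw [hUinj hn.1 hm.1 hxy]
  · -- RHS → Q-point
    intro hR g hg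
    set f : ℕ → (ℕ →₀ ZMod 2) := fun n => Finsupp.single (g n) 1 with hfdef
    have hf : ∀ x, (f ⁻¹' {x}).Finite := by
      intro x
      have hsub : f ⁻¹' {x} ⊆ ⋃ k ∈ (x.support : Set ℕ), g ⁻¹' {k} := by
        intro n hn
        simp only [Set.mem_preimage, Set.mem_singleton_iff] at hn
        have : g n ∈ x.support := by
          rw [← hn]
          simp [hfdef]
        exact Set.mem_biUnion this rfl
      exact ((x.support : Set ℕ).toFinite.biUnion fun k _ => hg k).subset hsub
    obtain ⟨U, hU, hUinj, _⟩ := hR f hf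
    refine ⟨U, hU, fun n hn m hm hnm => hUinj hn hm ?_⟩
    simp [hfdef, hnm]
end

section
/- A nonprincipal ultrafilter p on ω is selective if and only if for every function f : ω → [ω]^{<ω} that is not constant on any set in p, there is a set U ∈ p such that f restricted to U is injective and {f(n) : n ∈ U} is linearly independent over F₂. -/
private lemma zmod2_eq_one : ∀ {c : ZMod 2}, c ≠ 0 → c = 1 := by decide

/-- max of support (0 if empty). -/
private noncomputable def maxS (v : ℕ →₀ ZMod 2) : ℕ :=
  if h : v.support.Nonempty then v.support.max' h else 0

private lemma maxS_mem {v : ℕ →₀ ZMod 2} (h : v ≠ 0) : maxS v ∈ v.support := by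
  have hne : v.support.Nonempty := Finsupp.support_nonempty_iff.2 h
  rw [maxS, dif_pos hne]
  exact v.support.max'_mem hne

private lemma le_maxS {v : ℕ →₀ ZMod 2} {a : ℕ} (ha : a ∈ v.support) : a ≤ maxS v := by
  have hne : v.support.Nonempty := ⟨a, ha⟩
  rw [maxS, dif_pos hne]
  exact v.support.le_max' a ha

private lemma apply_eq_zero_of_maxS_lt {v : ℕ →₀ ZMod 2} {a : ℕ} (h : maxS v < a) :
    v a = 0 := by
  by_contra hv
  exact absurd (le_maxS (Finsupp.mem_support_iff.2 hv)) (not_le.2 h)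

/-- A set of nonzero vectors with pairwise distinct support-maxima is linearly
independent over `F₂`. -/
private lemma indep_of_maxS (s : Set (ℕ →₀ ZMod 2)) (h0 : (0 : ℕ →₀ ZMod 2) ∉ s)
    (hinj : Set.InjOn maxS s) :
    LinearIndependent (ZMod 2) (Subtype.val : ↥s → (ℕ →₀ ZMod 2)) := by
  classical
  rw [linearIndependent_iff']
  intro t g hsum i hi
  by_contra hgi
  set t' : Finset ↥s := t.filter (fun j => g j ≠ 0) with ht'
  have hit' : i ∈ t' := Finset.mem_filter.2 ⟨hi, hgi⟩
  obtain ⟨i₀, hi₀, hmax⟩ := t'.exists_max_image (fun j => maxS j.1) ⟨i, hit'⟩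
  set m₀ := maxS (i₀ : ℕ →₀ ZMod 2) with hm₀
  have hsum' : ∑ j ∈ t', g j • (j : ℕ →₀ ZMod 2) = 0 := by
    rw [ht', Finset.sum_filter_of_ne, hsum]
    intro x _ hx hgx
    exact hx (by rw [hgx, zero_smul])
  have happ : (∑ j ∈ t', g j • (j : ℕ →₀ ZMod 2)) m₀ = 0 := by rw [hsum']; rfl
  rw [Finsupp.finset_sum_apply] at happ
  have hsingle : ∑ j ∈ t', (g j • (j : ℕ →₀ ZMod 2)) m₀
      = g i₀ • (i₀ : ℕ →₀ ZMod 2) m₀ := by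
    apply Finset.sum_eq_single i₀
    · intro j hj hne
      have hjv : (j : ℕ →₀ ZMod 2) ≠ (i₀ : ℕ →₀ ZMod 2) :=
        fun h => hne (Subtype.ext h)
      have hlt : maxS (j : ℕ →₀ ZMod 2) < m₀ :=
        lt_of_le_of_ne (hmax j hj) (fun h => hjv (hinj j.2 i₀.2 h))
      rw [Finsupp.smul_apply, apply_eq_zero_of_maxS_lt hlt, smul_zero]
    · intro h; exact absurd hi₀ h
  rw [hsingle] at happ
  have hgz : g i₀ ≠ 0 := (Finset.mem_filter.1 hi₀).2
  have hvz : (i₀ : ℕ →₀ ZMod 2) ≠ 0 := fun h => h0 (h ▸ i₀.2)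
  have hval : (i₀ : ℕ →₀ ZMod 2) m₀ ≠ 0 := Finsupp.mem_support_iff.1 (maxS_mem hvz)
  exact mul_ne_zero hgz hval (by simpa [smul_eq_mul] using happ)

/-- Finsupps over `F₂` with support in a fixed finite range form a finite set. -/
private lemma finite_bounded_support (k : ℕ) :
    {x : ℕ →₀ ZMod 2 | x.support ⊆ Finset.range k}.Finite := by
  apply Set.Finite.of_finite_image (f := fun x => x.support)
  · apply Set.Finite.subset (Finset.range k).powerset.finite_toSet
    rintro t ⟨x, hx, rfl⟩
    rw [Finset.mem_coe, Finset.mem_powerset]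
    exact hx
  · intro x hx y hy hxy
    have hxy' : x.support = y.support := hxy
    ext a
    by_cases hax : a ∈ x.support
    · have hay : a ∈ y.support := hxy' ▸ hax
      rw [zmod2_eq_one (Finsupp.mem_support_iff.1 hax),
        zmod2_eq_one (Finsupp.mem_support_iff.1 hay)]
    · have hay : a ∉ y.support := hxy' ▸ hax
      rw [Finsupp.notMem_support_iff.1 hax, Finsupp.notMem_support_iff.1 hay]

private lemma mem_infinite {p : Ultrafilter ℕ} (hp : (p : Filter ℕ) ≤ Filter.cofinite)
    {U : Set ℕ} (hU : U ∈ p) : U.Infinite := by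
  intro hfin
  have h1 : Uᶜ ∈ p := hp hfin.compl_mem_cofinite
  have h2 : U ∩ Uᶜ ∈ p := Filter.inter_mem hU h1
  rw [Set.inter_compl_self] at h2
  exact Filter.empty_notMem (p : Filter ℕ) h2

/-- A nonprincipal ultrafilter `p` on `ω` is selective (a P-point and a Q-point)
iff for every `f : ω → [ω]^{<ω}` (here `ℕ →₀ ZMod 2`) which is not constant on
any set in `p` there is `U ∈ p` on which `f` is injective with linearly
independent image over `F₂`. -/
theorem stmt8 (p : Ultrafilter ℕ) (hp : (p : Filter ℕ) ≤ Filter.cofinite) :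
    ((∀ g : ℕ → ℕ,
        (∃ U ∈ p, ∀ k, (U ∩ g ⁻¹' {k}).Finite) ∨ (∃ U ∈ p, ∃ k, ∀ n ∈ U, g n = k)) ∧
      (∀ g : ℕ → ℕ, (∀ k, (g ⁻¹' {k}).Finite) → ∃ U ∈ p, Set.InjOn g U)) ↔
      (∀ f : ℕ → (ℕ →₀ ZMod 2),
        (∀ U ∈ p, ¬ ∃ c, ∀ n ∈ U, f n = c) →
        ∃ U ∈ p, Set.InjOn f U ∧
          LinearIndependent (ZMod 2) (Subtype.val : ↥(f '' U) → (ℕ →₀ ZMod 2))) := by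
  classical
  constructor
  · rintro ⟨hP, hQ⟩ f hf
    set M : ℕ → ℕ := fun n => maxS (f n) with hM
    rcases hP M with ⟨V, hV, hVfin⟩ | ⟨V, hV, k, hVk⟩
    · -- M finite-to-one on V; make it globally finite-to-one, use Q-point
      set M' : ℕ → ℕ := fun n => if n ∈ V then 2 * M n else 2 * n + 1 with hM'
      have hM'fin : ∀ k, (M' ⁻¹' {k}).Finite := by
        intro k
        apply Set.Finite.subset ((hVfin (k / 2)).union (Set.finite_singleton ((k - 1) / 2)))
        intro n hn
        simp only [Set.mem_preimage, Set.mem_singleton_iff, hM'] at hn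
        by_cases hnV : n ∈ V
        · rw [if_pos hnV] at hn
          exact Or.inl ⟨hnV, by simp [← hn]⟩
        · rw [if_neg hnV] at hn
          exact Or.inr (by simp [← hn])
      obtain ⟨W, hW, hWinj⟩ := hQ M' hM'fin
      have hVW : V ∩ W ∈ p := Filter.inter_mem hV hW
      have hMinj : Set.InjOn M (V ∩ W) := by
        intro a ha b hb hab
        exact hWinj ha.2 hb.2 (by simp only [hM', if_pos ha.1, if_pos hb.1, hab])
      -- remove zeros of f
      set Z : Set ℕ := {n | n ∈ V ∩ W ∧ f n = 0} with hZ
      have hZsub : Z.Subsingleton := by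
        intro a ha b hb
        exact hMinj ha.1 hb.1 (by rw [hM]; simp only; rw [ha.2, hb.2])
      have hZc : Zᶜ ∈ p := hp hZsub.finite.compl_mem_cofinite
      set U : Set ℕ := (V ∩ W) ∩ Zᶜ with hU
      have hUp : U ∈ p := Filter.inter_mem hVW hZc
      have hfne : ∀ n ∈ U, f n ≠ 0 := by
        intro n hn hfn
        exact hn.2 ⟨hn.1, hfn⟩
      have hMinjU : Set.InjOn M U := hMinj.mono (Set.inter_subset_left)
      have hfinj : Set.InjOn f U := by
        intro a ha b hb hab
        exact hMinjU ha hb (by rw [hM]; simp only [hab])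
      refine ⟨U, hUp, hfinj, indep_of_maxS _ ?_ ?_⟩
      · rintro ⟨n, hn, hn0⟩
        exact hfne n hn hn0
      · rintro v ⟨a, ha, rfl⟩ w ⟨b, hb, rfl⟩ hvw
        rw [hMinjU ha hb hvw]
    · -- M constant on V: f has finitely many values on V, contradiction
      exfalso
      have hsub : V ⊆ ⋃ c ∈ f '' V, V ∩ f ⁻¹' {c} := by
        intro n hn
        exact Set.mem_biUnion ⟨n, hn, rfl⟩ ⟨hn, rfl⟩
      have himfin : (f '' V).Finite := by
        apply Set.Finite.subset (finite_bounded_support (k + 1))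
        rintro v ⟨n, hn, rfl⟩
        intro a ha
        rw [Finset.mem_range, Nat.lt_succ_iff]
        calc a ≤ maxS (f n) := le_maxS ha
        _ = k := hVk n hn
      have hmem : (⋃ c ∈ f '' V, V ∩ f ⁻¹' {c}) ∈ p := Filter.mem_of_superset hV hsub
      obtain ⟨c, _, hc⟩ := (Ultrafilter.finite_biUnion_mem_iff himfin).1 hmem
      exact hf _ hc ⟨c, fun n hn => hn.2⟩
  · intro h
    constructor
    · -- P-point
      intro g
      by_cases hc : ∃ U ∈ p, ∃ k, ∀ n ∈ U, g n = k
      · exact Or.inr hc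
      · left
        set f : ℕ → (ℕ →₀ ZMod 2) := fun n => Finsupp.single (g n) 1 with hfdef
        obtain ⟨U, hU, hinj, -⟩ := h f (by
          rintro U hU ⟨c, hcU⟩
          obtain ⟨n₀, hn₀⟩ := Ultrafilter.nonempty_of_mem hU
          refine hc ⟨U, hU, g n₀, fun n hn => ?_⟩
          have : Finsupp.single (g n) (1 : ZMod 2) = Finsupp.single (g n₀) 1 := by
            rw [show Finsupp.single (g n) (1 : ZMod 2) = f n from rfl, hcU n hn,
              ← hcU n₀ hn₀]
          exact (Finsupp.single_left_inj one_ne_zero).1 this)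
        refine ⟨U, hU, fun k => ?_⟩
        apply Set.Subsingleton.finite
        intro a ha b hb
        apply hinj ha.1 hb.1
        show Finsupp.single (g a) (1 : ZMod 2) = Finsupp.single (g b) 1
        rw [ha.2, hb.2]
    · -- Q-point
      intro g hg
      set f : ℕ → (ℕ →₀ ZMod 2) := fun n => Finsupp.single (g n) 1 with hfdef
      obtain ⟨U, hU, hinj, -⟩ := h f (by
        rintro U hU ⟨c, hcU⟩
        obtain ⟨n₀, hn₀⟩ := Ultrafilter.nonempty_of_mem hU
        have hconst : ∀ n ∈ U, g n = g n₀ := by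
          intro n hn
          have : Finsupp.single (g n) (1 : ZMod 2) = Finsupp.single (g n₀) 1 := by
            rw [show Finsupp.single (g n) (1 : ZMod 2) = f n from rfl, hcU n hn,
              ← hcU n₀ hn₀]
          exact (Finsupp.single_left_inj one_ne_zero).1 this
        exact mem_infinite hp hU (Set.Finite.subset (hg (g n₀)) hconst))
      refine ⟨U, hU, fun a ha b hb hab => hinj ha hb ?_⟩
      show Finsupp.single (g a) (1 : ZMod 2) = Finsupp.single (g b) 1
      rw [hab]
end

section
/- Let {I_n : n ∈ ω} be a partition of ω into finite sets with |I_n| > n · Σ_{m<n} |I_m| for all n, and let 𝓑 = {B ⊆ ω : ∀n, |I_n \ B| ≤ Σ_{m<n} |I_m|}. Then 𝓑 is a centered family (every finite subfamily has infinite intersection), and moreover for every infinite A ⊆ ω the set ∪_{n∈A} I_n has infinite intersection with every finite intersection of members of 𝓑. -/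
open scoped Function

/-! A block `I n` misses `⋂ S` only if it is covered by the sets `I n \ B` (`B ∈ S`), which
have at most `|S| · Σ_{m<n} |I_m|` points in total; for `n ≥ |S|` the growth condition makes this
less than `|I n|`. So each of the infinitely many pairwise disjoint blocks `I n` with `n ∈ A`,
`n ≥ |S|` contributes its own point of `⋂ S`; centeredness is the case `A = ω`. -/

theorem Set.Finite.inter_biInter_nonempty_of_ncard_diff_le {α : Type*} {s : Set α}
    (hs : s.Finite) {S : Finset (Set α)} {k : ℕ} (hS : ∀ B ∈ S, (s \ B).ncard ≤ k)
    (hk : S.card * k < s.ncard) : (s ∩ ⋂ B ∈ S, B).Nonempty := by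
  by_contra hempty
  have hcover : s ⊆ ⋃ B ∈ S, s \ B := by
    intro x hx
    by_contra hx'
    simp only [Set.mem_iUnion, Set.mem_sdiff, not_exists, not_and, not_not] at hx'
    exact hempty ⟨x, hx, Set.mem_iInter₂.mpr (hx' · · hx)⟩
  have hfin : (⋃ B ∈ S, s \ B).Finite :=
    hs.subset (Set.iUnion₂_subset fun _ _ => Set.sdiff_subset)
  have : s.ncard ≤ S.card * k :=
    calc s.ncard ≤ (⋃ B ∈ S, s \ B).ncard := Set.ncard_le_ncard hcover hfin
      _ ≤ ∑ B ∈ S, (s \ B).ncard := S.set_ncard_biUnion_le _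
      _ ≤ S.card * k := by simpa using Finset.sum_le_card_nsmul S _ k hS
  omega

theorem Set.Infinite.biUnion_inter_of_pairwise_disjoint {ι α : Type*} {I : ι → Set α}
    (hI : Pairwise (Disjoint on I)) {A : Set ι} (hA : A.Infinite) {C : Set α}
    (hC : ∀ n ∈ A, (I n ∩ C).Nonempty) : ((⋃ n ∈ A, I n) ∩ C).Infinite := by
  rw [Set.iUnion₂_inter]
  refine hA.biUnion fun m hm n _ hmn => ?_
  by_contra hne
  obtain ⟨x, hx⟩ := hC m hm
  have hxn : x ∈ I n ∩ C := hmn ▸ hx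
  exact Set.disjoint_left.mp (hI hne) hx.1 hxn.1

theorem stmt10_general (I : ℕ → Finset ℕ)
    (hdisj : ∀ m n, m ≠ n → Disjoint (I m) (I n))
    (hgrow : ∀ n, (I n).card > n * ∑ m ∈ Finset.range n, (I m).card) :
    (∀ S : Finset (Set ℕ),
      (∀ B ∈ S, ∀ n, ((I n : Set ℕ) \ B).ncard ≤ ∑ m ∈ Finset.range n, (I m).card) →
      (⋂ B ∈ S, B).Infinite) ∧
    (∀ A : Set ℕ, A.Infinite → ∀ S : Finset (Set ℕ),
      (∀ B ∈ S, ∀ n, ((I n : Set ℕ) \ B).ncard ≤ ∑ m ∈ Finset.range n, (I m).card) →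
      ((⋃ n ∈ A, (I n : Set ℕ)) ∩ ⋂ B ∈ S, B).Infinite) := by
  have hI : Pairwise (Disjoint on fun n => (I n : Set ℕ)) :=
    fun m n h => Finset.disjoint_coe.mpr (hdisj m n h)
  have hlarge : ∀ A : Set ℕ, A.Infinite → ∀ S : Finset (Set ℕ),
      (∀ B ∈ S, ∀ n, ((I n : Set ℕ) \ B).ncard ≤ ∑ m ∈ Finset.range n, (I m).card) →
      ((⋃ n ∈ A, (I n : Set ℕ)) ∩ ⋂ B ∈ S, B).Infinite := by
    intro A hA S hS
    have hmeets (n : ℕ) (hn : S.card ≤ n) : ((I n : Set ℕ) ∩ ⋂ B ∈ S, B).Nonempty :=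
      (I n).finite_toSet.inter_biInter_nonempty_of_ncard_diff_le (hS · · n) <| by
        rw [Set.ncard_coe_finset]
        exact (Nat.mul_le_mul_right _ hn).trans_lt (hgrow n)
    have htail := (hA.sdiff (Set.finite_Iio S.card)).biUnion_inter_of_pairwise_disjoint hI
      fun n hn => hmeets n (not_lt.mp hn.2)
    exact htail.mono (Set.inter_subset_inter_left _
      (Set.biUnion_subset_biUnion_left Set.sdiff_subset))
  exact ⟨fun S hS => (hlarge Set.univ Set.infinite_univ S hS).mono Set.inter_subset_right,
    hlarge⟩

/-- Let `{I_n}` be a partition of `ω` into finite sets with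
`|I_n| > n · Σ_{m<n} |I_m|`, and let `𝓑` be the family of `B ⊆ ω` with
`|I_n \ B| ≤ Σ_{m<n} |I_m|` for all `n`. Then `𝓑` is centered (finite
subfamilies have infinite intersection), and for every infinite `A ⊆ ω` the set
`⋃_{n∈A} I_n` has infinite intersection with every finite intersection of
members of `𝓑`. -/
theorem stmt10 (I : ℕ → Finset ℕ)
    (hdisj : ∀ m n, m ≠ n → Disjoint (I m) (I n))
    (hcover : ∀ k : ℕ, ∃ n, k ∈ I n)
    (hgrow : ∀ n, (I n).card > n * ∑ m ∈ Finset.range n, (I m).card) :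
    (∀ S : Finset (Set ℕ),
      (∀ B ∈ S, ∀ n, ((I n : Set ℕ) \ B).ncard ≤ ∑ m ∈ Finset.range n, (I m).card) →
      (⋂ B ∈ S, B).Infinite) ∧
    (∀ A : Set ℕ, A.Infinite → ∀ S : Finset (Set ℕ),
      (∀ B ∈ S, ∀ n, ((I n : Set ℕ) \ B).ncard ≤ ∑ m ∈ Finset.range n, (I m).card) →
      ((⋃ n ∈ A, (I n : Set ℕ)) ∩ ⋂ B ∈ S, B).Infinite) :=
  stmt10_general I hdisj hgrow
end

section
/- There exist a sequence (Φ_n) of homomorphisms from [ω]^{<ω} to Z/2Z and a function H : Hom([ω]^{<ω}, Z/2Z) → ω such that for every n, the family consisting of the complement of Ker(Φ_n) together with all Ker(Φ) with H(Φ) ≤ n is centered (every finite subfamily has nonempty, indeed infinite, intersection). Specifically, one may take (Φ_n) to be any countable linearly independent family in the dual space and H(Φ) the least n with Φ ∈ span{Φ_i : i < n} ⊕ W, where W is a complement of span{Φ_n : n ∈ ω} in Hom([ω]^{<ω}, Z/2Z). -/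
/-!
Take `Φ n` to be the coordinate functionals, fix a complement `W` of their span in the dual, and let
`H Ψ` be the least `n` with `Ψ ∈ span {Φ i | i < n} ⊔ W`. Since the `Φ i` are independent and their
span meets `W` trivially, `Φ n ∉ span {Φ i | i < n} ⊔ W`, so `Φ n` is not in the span of any finite
set `S` of functionals of height `≤ n`. Hence some `x` has `Φ n x ≠ 0` and `Ψ x = 0` for `Ψ ∈ S`.
The joint kernel of `Φ n` and `S` has finite index in the infinite group `ℕ →₀ ZMod 2`, so the coset
of `x` is an infinite set of such points.
-/

open Set Submodule

theorem AddMonoidHom.infinite_preimage_singleton_apply {E M : Type*} [AddGroup E] [AddGroup M]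
    [Infinite E] [Finite M] (F : E →+ M) (x : E) : (F ⁻¹' {F x}).Infinite := by
  obtain ⟨y, hy⟩ := Finite.exists_infinite_fiber F
  have hy : (F ⁻¹' {y}).Infinite := infinite_coe_iff.mp hy
  obtain ⟨z, hz⟩ := hy.nonempty
  refine (hy.image (add_right_injective (x - z)).injOn).mono ?_
  rintro _ ⟨w, hw, rfl⟩
  simp only [mem_preimage, mem_singleton_iff] at hz hw ⊢
  rw [map_add, map_sub, hz, hw, sub_add_cancel]

section Separation

variable {K E ι : Type*} [Field K] [AddCommGroup E] [Module K E] [Finite ι]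
  {φ : Module.Dual K E} {ψ : ι → Module.Dual K E}

theorem Module.Dual.exists_apply_ne_zero_of_notMem_span (h : φ ∉ span K (range ψ)) :
    ∃ x, φ x ≠ 0 ∧ ∀ i, ψ i x = 0 := by
  contrapose! h
  refine mem_span_of_iInf_ker_le_ker fun x hx => ?_
  simp only [mem_iInf, LinearMap.mem_ker] at hx ⊢
  by_contra hφx
  obtain ⟨i, hi⟩ := h x hφx
  exact hi (hx i)

theorem Module.Dual.infinite_setOf_apply_ne_zero_of_notMem_span [Finite K] [Infinite E]
    (h : φ ∉ span K (range ψ)) : {x | φ x ≠ 0 ∧ ∀ i, ψ i x = 0}.Infinite := by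
  obtain ⟨x, hφx, hψx⟩ := exists_apply_ne_zero_of_notMem_span h
  let G : E →ₗ[K] K × (ι → K) := φ.prod (LinearMap.pi ψ)
  refine (G.toAddMonoidHom.infinite_preimage_singleton_apply x).mono fun y hy => ?_
  simp only [mem_preimage, mem_singleton_iff, LinearMap.toAddMonoidHom_coe, G,
    LinearMap.prod_apply, Function.prod, LinearMap.pi_apply, Prod.mk.injEq, funext_iff] at hy
  exact ⟨hy.1 ▸ hφx, fun i => (hy.2 i).trans (hψx i)⟩

end Separation

section Filtration

variable {K V : Type*} [Ring K] [AddCommGroup V] [Module K V] {e : ℕ → V} {W : Submodule K V}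

theorem monotone_span_image_Iio : Monotone fun n => span K (e '' Iio n) :=
  fun _ _ hmn => span_mono (image_mono (Iio_subset_Iio hmn))

theorem exists_mem_span_image_Iio_sup (hW : Codisjoint (span K (range e)) W) (v : V) :
    ∃ n, v ∈ span K (e '' Iio n) ⊔ W := by
  have hv : v ∈ (⨆ n, span K (e '' Iio n)) ⊔ W := by
    rw [← span_iUnion, ← image_iUnion, iUnion_Iio, image_univ, hW.eq_top]
    exact mem_top
  obtain ⟨u, hu, w, hw, rfl⟩ := mem_sup.mp hv
  obtain ⟨n, hn⟩ := (mem_iSup_of_directed _ monotone_span_image_Iio.directed_le).mp hu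
  exact ⟨n, add_mem_sup hn hw⟩

theorem LinearIndependent.notMem_span_image_Iio_sup [Nontrivial K] (he : LinearIndependent K e)
    (hW : Disjoint (span K (range e)) W) (n : ℕ) : e n ∉ span K (e '' Iio n) ⊔ W := by
  intro h
  obtain ⟨u, hu, w, hw, huw⟩ := mem_sup.mp h
  have hu' : u ∈ span K (range e) := span_mono (image_subset_range _ _) hu
  have hw0 : w = 0 := by
    refine disjoint_def.mp hW w ?_ hw
    rw [eq_sub_of_add_eq' huw]
    exact sub_mem (subset_span (mem_range_self n)) hu'
  rw [hw0, add_zero] at huw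
  exact he.notMem_span_image self_notMem_Iio (huw ▸ hu)

end Filtration

/-- There exist a sequence `(Φ_n)` of homomorphisms from `[ω]^{<ω}` (here
`ℕ →₀ ZMod 2`) to `ZMod 2` and a map `H : Hom([ω]^{<ω}, ZMod 2) → ω` such that
for every `n` the family consisting of the complement of `Ker Φ_n` together with
all `Ker Ψ` for `H Ψ ≤ n` is centered: every finite subfamily has infinite
intersection. -/
theorem stmt18 :
    ∃ (Φ : ℕ → ((ℕ →₀ ZMod 2) →+ ZMod 2))
      (H : ((ℕ →₀ ZMod 2) →+ ZMod 2) → ℕ),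
      ∀ n : ℕ, ∀ S : Finset ((ℕ →₀ ZMod 2) →+ ZMod 2),
        (∀ Ψ ∈ S, H Ψ ≤ n) →
        ({x | Φ n x ≠ 0} ∩ ⋂ Ψ ∈ S, {x | Ψ x = 0}).Infinite := by
  classical
  let e : ℕ → Module.Dual (ZMod 2) (ℕ →₀ ZMod 2) := Finsupp.basisSingleOne.coord
  obtain ⟨W, hW⟩ := (span (ZMod 2) (range e)).exists_isCompl
  have hH := exists_mem_span_image_Iio_sup hW.codisjoint
  refine ⟨fun n => (e n).toAddMonoidHom, fun Ψ => Nat.find (hH (Ψ.toZModLinearMap 2)),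
    fun n S hS => ?_⟩
  have hS' : range (fun Ψ : S => Ψ.1.toZModLinearMap 2) ⊆ ↑(span (ZMod 2) (e '' Iio n) ⊔ W) := by
    rintro _ ⟨Ψ, rfl⟩
    exact sup_le_sup_right (monotone_span_image_Iio (hS Ψ Ψ.2)) W (Nat.find_spec (hH _))
  have hnotMem : e n ∉ span (ZMod 2) (range fun Ψ : S => Ψ.1.toZModLinearMap 2) := fun h =>
    Finsupp.basisSingleOne.linearIndependent_coord.notMem_span_image_Iio_sup hW.disjoint n
      (span_le.mpr hS' h)
  refine (Module.Dual.infinite_setOf_apply_ne_zero_of_notMem_span hnotMem).mono ?_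
  rintro x ⟨hx, hxS⟩
  exact ⟨hx, mem_iInter₂.mpr fun Ψ hΨ => hxS ⟨Ψ, hΨ⟩⟩
end
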